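/- For every natural number n, the normal ordering (X + s D_q)^n = Σ_{m=0}^{n} Σ_{ℓ=0}^{min(m,n-m)} [n-2ℓ choose m-ℓ]_q · W(n,ℓ) · X^{m-ℓ} s^{n-m} D_q^{n-m-ℓ} holds as an identity of operators on the polynomial ring, where W(n,ℓ) = (1-q)^{-ℓ} · Σ_{i=0}^{ℓ} C(n,i) · (-1)^{ℓ-i} · q^{C(ℓ-i,2)} · λ_q(n-2i, ℓ-i), with C(n,i) the ordinary binomial coefficient and C(ℓ-i,2) = (ℓ-i)(ℓ-i-1)/2. -/

import Mathlib

noncomputable section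

/-- The field `ℚ(q,s)` of rational functions in two indeterminates. -/
abbrev F : Type := FractionRing (MvPolynomial (Fin 2) ℚ)

/-- The indeterminate `q`. -/
def q : F := algebraMap (MvPolynomial (Fin 2) ℚ) F (MvPolynomial.X 0)

/-- The indeterminate `s`. -/
def s : F := algebraMap (MvPolynomial (Fin 2) ℚ) F (MvPolynomial.X 1)

/-- The q-integer `[n]_q = 1 + q + ⋯ + q^{n-1}`. -/
def qInt (n : ℕ) : F := ∑ i ∈ Finset.range n, q ^ i

/-- The q-factorial `[n]_q! = ∏_{k=1}^n [k]_q`. -/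
def qFact (n : ℕ) : F := ∏ k ∈ Finset.range n, qInt (k + 1)

/-- The q-binomial coefficient `[n choose k]_q = [n]_q!/([k]_q! [n-k]_q!)`. -/
def qBinom (n k : ℕ) : F := qFact n / (qFact k * qFact (n - k))

/-- The operator `X` of multiplication by `x` on `F[x]`. -/
def Xop : Module.End F (Polynomial F) := LinearMap.mulLeft F Polynomial.X

/-- Division by `x` (discarding the constant term), as a linear map. -/
def divXL : Polynomial F →ₗ[F] Polynomial F where
  toFun := Polynomial.divX
  map_add' p r := Polynomial.divX_add
  map_smul' a p := by
    ext n
    simp [Polynomial.coeff_divX, Polynomial.coeff_smul]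

/-- The q-derivative `D_q f(x) = (f(qx) - f(x))/((q-1)x)`; it is the F-linear
operator on `F[x]` determined by `D_q x^n = [n]_q x^{n-1}`. -/
def Dq : Module.End F (Polynomial F) :=
  (q - 1)⁻¹ •
    (divXL ∘ₗ
      ((Polynomial.aeval (Polynomial.C q * Polynomial.X)).toLinearMap - LinearMap.id))

/-- The polynomials `h_n(x,t) = Σ_j q^{j²} t^j [n]_q!/((1+q)⋯(1+q^j)·[j]_q!·[n-2j]_q!)
x^{n-2j}` (the parameter `t` will be specialized to `s` or `q²s`). -/
def h (t : F) (n : ℕ) : Polynomial F :=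
  ∑ j ∈ Finset.range (n / 2 + 1),
    Polynomial.C (q ^ (j ^ 2) * t ^ j * qFact n /
        ((∏ i ∈ Finset.range j, (1 + q ^ (i + 1))) * qFact j * qFact (n - 2 * j))) *
      Polynomial.X ^ (n - 2 * j)


/-- The q-Lucas coefficient `λ_q(n,k) = ([n]_q/[n-k]_q)·[n-k choose k]_q` for `n ≥ 1`,
with `λ_q(0,0) = 1`. -/
def lam (n k : ℕ) : F :=
  if n = 0 ∧ k = 0 then 1 else qInt n / qInt (n - k) * qBinom (n - k) k

/-- The q-Weyl coefficient
`W(n,ℓ) = (1-q)^{-ℓ} Σ_{i=0}^{ℓ} C(n,i) (-1)^{ℓ-i} q^{C(ℓ-i,2)} λ_q(n-2i, ℓ-i)`. -/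
def W (n ℓ : ℕ) : F :=
  (1 - q)⁻¹ ^ ℓ *
    ∑ i ∈ Finset.range (ℓ + 1),
      (n.choose i : F) * (-1) ^ (ℓ - i) * q ^ (ℓ - i).choose 2 * lam (n - 2 * i) (ℓ - i)

/-!
Everything follows from the `q`-Weyl relation `D X = q X D + 1`. The `q`-binomial expansions
`E_k = Σ_a [k choose a]_q s^(k-a) X^a D^(k-a)`, which would be `(X + s D)^k` if `D X = q X D`,
satisfy `(X + s D) E_k = E_(k+1) + s [k]_q E_(k-1)` instead. Hence
`(X + s D)^n = Σ_ℓ c(n, ℓ) s^ℓ E_(n-2ℓ)` with `c(n, 0) = 1` and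
`c(n+1, ℓ+1) = c(n, ℓ+1) + [n-2ℓ]_q c(n, ℓ)`, and expanding `E_(n-2ℓ)` gives the statement.
That `W` solves this recursion on `2ℓ ≤ n` follows from Pascal's rule for `C(n, i)` and a
linear identity between neighbouring signed `q`-Lucas numbers `(-1)^j q^C(j,2) λ_q(2j+b, j)`,
with a separate identity on the edge `n = 2ℓ + 1`.
-/

open Finset

section QNumbers

lemma q_pow_ne_one {k : ℕ} (hk : k ≠ 0) : q ^ k ≠ 1 := by
  intro h
  rw [q, ← map_pow, ← map_one (algebraMap (MvPolynomial (Fin 2) ℚ) F),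
    (IsFractionRing.injective _ _).eq_iff] at h
  have h2 := congrArg (MvPolynomial.eval fun _ => (2 : ℚ)) h
  simp only [map_pow, MvPolynomial.eval_X, map_one] at h2
  exact absurd h2 (one_lt_pow₀ one_lt_two hk).ne'

lemma q_sub_one_ne_zero : q - 1 ≠ 0 :=
  sub_ne_zero.mpr (by simpa using q_pow_ne_one one_ne_zero)

lemma sub_one_mul_qInt (k : ℕ) : (q - 1) * qInt k = q ^ k - 1 := by
  rw [qInt, mul_comm, geom_sum_mul]

lemma qInt_eq_div (k : ℕ) : qInt k = (q ^ k - 1) / (q - 1) := by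
  rw [eq_div_iff q_sub_one_ne_zero, mul_comm, sub_one_mul_qInt]

lemma qInt_ne_zero {k : ℕ} (hk : k ≠ 0) : qInt k ≠ 0 := by
  rw [qInt_eq_div]
  exact div_ne_zero (sub_ne_zero.mpr (q_pow_ne_one hk)) q_sub_one_ne_zero

@[simp] lemma qInt_zero : qInt 0 = 0 := by simp [qInt]

@[simp] lemma qInt_one : qInt 1 = 1 := by simp [qInt]

lemma qInt_add (a b : ℕ) : qInt (a + b) = qInt a + q ^ a * qInt b := by
  simp only [qInt, sum_range_add, pow_add, mul_sum]

@[simp] lemma qFact_zero : qFact 0 = 1 := by simp [qFact]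

lemma qFact_succ (k : ℕ) : qFact (k + 1) = qFact k * qInt (k + 1) :=
  prod_range_succ _ _

lemma qFact_ne_zero (k : ℕ) : qFact k ≠ 0 :=
  prod_ne_zero_iff.mpr fun i _ => qInt_ne_zero i.succ_ne_zero

@[simp] lemma qBinom_zero_right (n : ℕ) : qBinom n 0 = 1 := by
  simp [qBinom, qFact_ne_zero]

@[simp] lemma qBinom_self (n : ℕ) : qBinom n n = 1 := by
  simp [qBinom, qFact_ne_zero]

lemma qBinom_add_left (a b : ℕ) : qBinom (a + b) a = qFact (a + b) / (qFact a * qFact b) := by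
  rw [qBinom, Nat.add_sub_cancel_left]

lemma qBinom_succ_add_succ (a b : ℕ) :
    qBinom (a + b + 2) (a + 1) =
      qBinom (a + b + 1) a + q ^ (a + 1) * qBinom (a + b + 1) (a + 1) := by
  rw [show a + b + 2 = a + 1 + (b + 1) by omega, show a + b + 1 = a + (b + 1) by omega,
    qBinom_add_left, qBinom_add_left, show a + (b + 1) = a + 1 + b by omega, qBinom_add_left]
  rw [show a + 1 + (b + 1) = a + 1 + b + 1 by omega, qFact_succ (a + 1 + b), qFact_succ a,
    qFact_succ b, show a + 1 + b + 1 = (a + 1) + (b + 1) by omega, qInt_add (a + 1) (b + 1)]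
  field_simp [qFact_ne_zero, qInt_ne_zero]

lemma qInt_mul_qBinom_add_left (a b : ℕ) :
    qInt (a + 1) * qBinom (a + 1 + b) (a + 1) = qInt (a + b + 1) * qBinom (a + b) a := by
  rw [qBinom_add_left, qBinom_add_left, show a + 1 + b = a + b + 1 by omega, qFact_succ (a + b),
    qFact_succ a]
  field_simp [qFact_ne_zero, qInt_ne_zero]

end QNumbers

section QWeylAlgebra

variable {A : Type*} [Ring A] [Algebra F A]

lemma mul_pow_succ_of_mul_eq {x d : A} (hxd : d * x = q • (x * d) + 1) (a : ℕ) :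
    d * x ^ (a + 1) = q ^ (a + 1) • (x ^ (a + 1) * d) + qInt (a + 1) • x ^ a := by
  induction a with
  | zero => simpa using hxd
  | succ a ih =>
    rw [pow_succ x (a + 1), ← mul_assoc, ih, add_mul, smul_mul_assoc, smul_mul_assoc, mul_assoc,
      hxd, mul_add, mul_smul_comm, mul_one, ← mul_assoc, ← pow_succ, smul_add, smul_smul,
      ← pow_succ, qInt_add (a + 1) 1, qInt_one, mul_one, add_smul, ← pow_succ]
    abel

/-- The normal-ordered expansion that the `q`-binomial theorem gives for `(x + t d) ^ k` when
`d x = q x d`. -/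
def qBinomExpand (x d : A) (t : F) (k : ℕ) : A :=
  ∑ p ∈ antidiagonal k, (qBinom (p.1 + p.2) p.1 * t ^ p.2) • (x ^ p.1 * d ^ p.2)

lemma qBinomExpand_zero (x d : A) (t : F) : qBinomExpand x d t 0 = 1 := by
  simp [qBinomExpand, qBinom]

lemma qBinomExpand_succ (x d : A) (t : F) (k : ℕ) :
    qBinomExpand x d t (k + 1) = x * qBinomExpand x d t k +
      ∑ p ∈ antidiagonal k, (q ^ p.1 * qBinom (p.1 + p.2) p.1 * t ^ (p.2 + 1)) •
        (x ^ p.1 * d ^ (p.2 + 1)) := by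
  rcases k with _ | k
  · simp [qBinomExpand, Nat.sum_antidiagonal_succ, add_comm]
  rw [qBinomExpand, Nat.sum_antidiagonal_succ', Nat.sum_antidiagonal_succ, qBinomExpand, mul_sum,
    Nat.sum_antidiagonal_succ', Nat.sum_antidiagonal_succ]
  have pascal : ∀ p ∈ antidiagonal k,
      (qBinom (p.1 + 1 + (p.2 + 1)) (p.1 + 1) * t ^ (p.2 + 1)) • (x ^ (p.1 + 1) * d ^ (p.2 + 1)) =
        x * ((qBinom (p.1 + (p.2 + 1)) p.1 * t ^ (p.2 + 1)) • (x ^ p.1 * d ^ (p.2 + 1))) +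
        (q ^ (p.1 + 1) * qBinom (p.1 + 1 + p.2) (p.1 + 1) * t ^ (p.2 + 1)) •
          (x ^ (p.1 + 1) * d ^ (p.2 + 1)) := by
    intro p _
    rw [mul_smul_comm, ← mul_assoc, ← pow_succ', ← add_smul, ← add_mul]
    congr 2
    rw [show p.1 + 1 + (p.2 + 1) = p.1 + p.2 + 2 by omega,
      show p.1 + (p.2 + 1) = p.1 + p.2 + 1 by omega, show p.1 + 1 + p.2 = p.1 + p.2 + 1 by omega]
    exact qBinom_succ_add_succ p.1 p.2
  rw [sum_congr rfl pascal, sum_add_distrib]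
  simp only [zero_add, add_zero, qBinom_self, qBinom_zero_right, pow_zero, one_mul, mul_one]
  rw [one_smul, one_smul, ← pow_succ']
  abel

lemma smul_mul_qBinomExpand_succ {x d : A} (hxd : d * x = q • (x * d) + 1) (t : F) (k : ℕ) :
    (t • d) * qBinomExpand x d t (k + 1) =
      ∑ p ∈ antidiagonal (k + 1), (q ^ p.1 * qBinom (p.1 + p.2) p.1 * t ^ (p.2 + 1)) •
        (x ^ p.1 * d ^ (p.2 + 1)) + (t * qInt (k + 1)) • qBinomExpand x d t k := by
  have term : ∀ p ∈ antidiagonal k,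
      (t • d) * ((qBinom (p.1 + 1 + p.2) (p.1 + 1) * t ^ p.2) • (x ^ (p.1 + 1) * d ^ p.2)) =
        (q ^ (p.1 + 1) * qBinom (p.1 + 1 + p.2) (p.1 + 1) * t ^ (p.2 + 1)) •
          (x ^ (p.1 + 1) * d ^ (p.2 + 1)) +
        (t * qInt (k + 1)) • ((qBinom (p.1 + p.2) p.1 * t ^ p.2) • (x ^ p.1 * d ^ p.2)) := by
    intro p hp
    rw [HasAntidiagonal.mem_antidiagonal] at hp
    rw [smul_mul_smul_comm, ← mul_assoc, ← mul_assoc, mul_pow_succ_of_mul_eq hxd, add_mul,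
      smul_mul_assoc, smul_mul_assoc, mul_assoc (x ^ (p.1 + 1)), ← pow_succ', smul_add,
      smul_smul, smul_smul, smul_smul, ← hp]
    congr 2
    · ring
    · linear_combination (t * t ^ p.2) * qInt_mul_qBinom_add_left p.1 p.2
  rw [qBinomExpand, mul_sum, Nat.sum_antidiagonal_succ, sum_congr rfl term, sum_add_distrib,
    Nat.sum_antidiagonal_succ, qBinomExpand, smul_sum, ← add_assoc]
  congr 2
  simp only [smul_mul_smul_comm, pow_zero, one_mul, qBinom_zero_right, ← pow_succ']

lemma add_smul_mul_qBinomExpand {x d : A} (hxd : d * x = q • (x * d) + 1) (t : F) (k : ℕ) :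
    (x + t • d) * qBinomExpand x d t k =
      qBinomExpand x d t (k + 1) + (t * qInt k) • qBinomExpand x d t (k - 1) := by
  rcases k with _ | k
  · simp [qBinomExpand_succ, qBinomExpand_zero]
  · rw [add_mul, smul_mul_qBinomExpand_succ hxd, qBinomExpand_succ x d t (k + 1),
      Nat.add_sub_cancel]
    abel

end QWeylAlgebra

section WeylCoefficients

lemma lam_zero_right (n : ℕ) : lam n 0 = 1 := by
  rcases n with _ | n
  · simp [lam]
  · simp [lam, qBinom, div_self (qInt_ne_zero n.succ_ne_zero), qFact_ne_zero]

lemma lam_two_mul_add {j b m : ℕ} (h : j + b = m + 1) :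
    lam (2 * j + b) j = qInt (2 * j + b) * qFact m / (qFact j * qFact b) := by
  rw [lam, if_neg (by omega), show 2 * j + b - j = m + 1 by omega, qBinom,
    show m + 1 - j = b by omega, qFact_succ]
  field_simp [qFact_ne_zero, qInt_ne_zero m.succ_ne_zero]

/-- The summand of `W n ℓ`, without `C(n, i)`, reindexed by `j = ℓ - i` so that
`n - 2 i = 2 j + b` with `b = n - 2 ℓ` fixed along the sum. -/
def wTerm (j b : ℕ) : F := (-1) ^ j * q ^ j.choose 2 * lam (2 * j + b) j

lemma wTerm_zero_left (b : ℕ) : wTerm 0 b = 1 := by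
  simp [wTerm, lam_zero_right]

lemma wTerm_succ_succ (j b : ℕ) :
    wTerm (j + 1) (b + 1) - wTerm (j + 1) b + wTerm j (b + 1) =
      (1 - q ^ (b + 2)) * wTerm j (b + 2) := by
  simp only [wTerm]
  rw [lam_two_mul_add (m := j + b + 1) (by omega), lam_two_mul_add (m := j + b) (by omega),
    lam_two_mul_add (m := j + b) (by omega), lam_two_mul_add (m := j + b + 1) (by omega),
    qFact_succ (j + b), qFact_succ j, qFact_succ b, qFact_succ (b + 1), qFact_succ b,
    Nat.choose_succ_succ', Nat.choose_one_right]
  field_simp [qFact_ne_zero, qInt_ne_zero]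
  simp only [qInt_eq_div]
  field_simp [q_sub_one_ne_zero]
  ring

lemma wTerm_succ_zero (j : ℕ) :
    wTerm (j + 1) 0 + wTerm j 0 = (1 - q) * wTerm j 1 - if j = 0 then 1 else 0 := by
  simp only [wTerm]
  rcases j with _ | j
  · rw [lam_two_mul_add (m := 0) (by omega)]
    simp [lam_zero_right, qFact_succ, qInt, Finset.sum_range_succ]
  rw [lam_two_mul_add (m := j + 1) (by omega), lam_two_mul_add (m := j) (by omega),
    lam_two_mul_add (m := j + 1) (by omega), if_neg j.succ_ne_zero, qFact_succ (j + 1),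
    qFact_succ j, Nat.choose_succ_succ' (j + 1), Nat.choose_one_right, qFact_succ 0, qFact_zero,
    qInt_one]
  field_simp [qFact_ne_zero, qInt_ne_zero]
  simp only [qInt_eq_div]
  field_simp [q_sub_one_ne_zero]
  ring

end WeylCoefficients

section WRecursion

lemma sum_antidiagonal_choose_succ_left_mul {R : Type*} [Semiring R] (f : ℕ → R) (n ℓ : ℕ) :
    ∑ p ∈ antidiagonal (ℓ + 1), ((n + 1).choose p.1 : R) * f p.2 =
      ∑ p ∈ antidiagonal (ℓ + 1), (n.choose p.1 : R) * f p.2 +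
        ∑ p ∈ antidiagonal ℓ, (n.choose p.1 : R) * f p.2 := by
  rw [Nat.sum_antidiagonal_succ, Nat.sum_antidiagonal_succ]
  simp only [Nat.choose_succ_succ', Nat.cast_add, add_mul, sum_add_distrib, Nat.choose_zero_right]
  abel

lemma W_two_mul_add (ℓ b : ℕ) :
    W (2 * ℓ + b) ℓ =
      (1 - q)⁻¹ ^ ℓ * ∑ p ∈ antidiagonal ℓ, ((2 * ℓ + b).choose p.1 : F) * wTerm p.2 b := by
  rw [W, Nat.sum_antidiagonal_eq_sum_range_succ fun i j => ((2 * ℓ + b).choose i : F) * wTerm j b]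
  congr 1
  refine sum_congr rfl fun i hi => ?_
  rw [mem_range] at hi
  rw [wTerm, show 2 * (ℓ - i) + b = 2 * ℓ + b - 2 * i by omega]
  ring

lemma W_zero_right (n : ℕ) : W n 0 = 1 := by
  simp [W, lam_zero_right]

lemma inv_one_sub_q_pow_succ_mul (k ℓ : ℕ) :
    (1 - q)⁻¹ ^ (ℓ + 1) * (1 - q ^ k) = qInt k * (1 - q)⁻¹ ^ ℓ := by
  have hq : (1 : F) - q ≠ 0 := sub_ne_zero.mpr fun h => q_sub_one_ne_zero (by rw [← h, sub_self])
  rw [show 1 - q ^ k = (1 - q) * qInt k by linear_combination sub_one_mul_qInt k, pow_succ]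
  field_simp

lemma W_succ_succ (ℓ b : ℕ) :
    W (2 * ℓ + b + 3) (ℓ + 1) =
      W (2 * ℓ + b + 2) (ℓ + 1) + qInt (b + 2) * W (2 * ℓ + b + 2) ℓ := by
  have key : ∀ n : ℕ, ∑ p ∈ antidiagonal (ℓ + 1), (n.choose p.1 : F) * wTerm p.2 (b + 1) -
      ∑ p ∈ antidiagonal (ℓ + 1), (n.choose p.1 : F) * wTerm p.2 b +
      ∑ p ∈ antidiagonal ℓ, (n.choose p.1 : F) * wTerm p.2 (b + 1) =
      (1 - q ^ (b + 2)) * ∑ p ∈ antidiagonal ℓ, (n.choose p.1 : F) * wTerm p.2 (b + 2) := by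
    intro n
    simp only [Nat.sum_antidiagonal_succ', wTerm_zero_left, mul_sum]
    rw [add_sub_add_left_eq_sub, ← sum_sub_distrib, ← sum_add_distrib]
    refine sum_congr rfl fun p _ => ?_
    rw [← mul_sub, ← mul_add, wTerm_succ_succ]
    ring
  have h1 := W_two_mul_add (ℓ + 1) (b + 1)
  have h2 := W_two_mul_add (ℓ + 1) b
  have h3 := W_two_mul_add ℓ (b + 2)
  rw [show 2 * (ℓ + 1) + (b + 1) = 2 * ℓ + b + 2 + 1 by omega,
    sum_antidiagonal_choose_succ_left_mul (fun j => wTerm j (b + 1))] at h1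
  rw [show 2 * (ℓ + 1) + b = 2 * ℓ + b + 2 by omega] at h2
  rw [show 2 * ℓ + (b + 2) = 2 * ℓ + b + 2 by omega] at h3
  rw [show 2 * ℓ + b + 3 = 2 * ℓ + b + 2 + 1 by omega, h1, h2, h3]
  linear_combination (1 - q)⁻¹ ^ (ℓ + 1) * key (2 * ℓ + b + 2) +
    (∑ p ∈ antidiagonal ℓ, ((2 * ℓ + b + 2).choose p.1 : F) * wTerm p.2 (b + 2)) *
      inv_one_sub_q_pow_succ_mul (b + 2) ℓ

lemma W_two_mul_add_two (ℓ : ℕ) : W (2 * ℓ + 2) (ℓ + 1) = W (2 * ℓ + 1) ℓ := by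
  -- the defect of `wTerm_succ_zero` at `j = 0` cancels the extra boundary term of the sum over
  -- `antidiagonal (ℓ + 1)`, by the symmetry `C(2ℓ+1, ℓ) = C(2ℓ+1, ℓ+1)`
  have corner :
      ∑ p ∈ antidiagonal ℓ, ((2 * ℓ + 1).choose p.1 : F) * (if p.2 = 0 then 1 else 0) =
        (2 * ℓ + 1).choose (ℓ + 1) := by
    rw [Nat.choose_symm_half]
    rcases ℓ with _ | ℓ <;> simp [Nat.sum_antidiagonal_succ']
  have key : ∑ p ∈ antidiagonal (ℓ + 1), ((2 * ℓ + 1).choose p.1 : F) * wTerm p.2 0 +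
      ∑ p ∈ antidiagonal ℓ, ((2 * ℓ + 1).choose p.1 : F) * wTerm p.2 0 =
      (1 - q) * ∑ p ∈ antidiagonal ℓ, ((2 * ℓ + 1).choose p.1 : F) * wTerm p.2 1 := by
    rw [Nat.sum_antidiagonal_succ', wTerm_zero_left, add_assoc, ← sum_add_distrib, mul_sum]
    simp only [← mul_add, wTerm_succ_zero, mul_sub, sum_sub_distrib, corner,
      mul_left_comm (1 - q)]
    ring
  have h1 := W_two_mul_add (ℓ + 1) 0
  rw [show 2 * (ℓ + 1) + 0 = 2 * ℓ + 1 + 1 by omega,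
    sum_antidiagonal_choose_succ_left_mul (fun j => wTerm j 0)] at h1
  have hc := inv_one_sub_q_pow_succ_mul 1 ℓ
  rw [qInt_one, one_mul, pow_one] at hc
  rw [h1, W_two_mul_add ℓ 1]
  linear_combination (1 - q)⁻¹ ^ (ℓ + 1) * key +
    (∑ p ∈ antidiagonal ℓ, ((2 * ℓ + 1).choose p.1 : F) * wTerm p.2 1) * hc

end WRecursion

section TruncatedW

/-- `W n ℓ` extended by zero outside `2 ℓ ≤ n`, so that its Pascal-type recursion
`truncW_succ_succ` holds for all `n` and `ℓ`. -/
def truncW (n ℓ : ℕ) : F := if 2 * ℓ ≤ n then W n ℓ else 0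

lemma truncW_zero_right (n : ℕ) : truncW n 0 = 1 := by
  simp [truncW, W_zero_right]

lemma truncW_of_lt {n ℓ : ℕ} (h : n < 2 * ℓ) : truncW n ℓ = 0 := by
  simp [truncW, Nat.not_le.mpr h]

lemma truncW_succ_succ (n ℓ : ℕ) :
    truncW (n + 1) (ℓ + 1) = truncW n (ℓ + 1) + qInt (n - 2 * ℓ) * truncW n ℓ := by
  rcases lt_trichotomy n (2 * ℓ + 1) with h | rfl | h
  · rw [truncW_of_lt (by omega), truncW_of_lt (by omega)]
    rcases (show n = 2 * ℓ ∨ n < 2 * ℓ by omega) with rfl | h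
    · simp
    · simp [truncW_of_lt h]
  · rw [truncW_of_lt (n := 2 * ℓ + 1) (ℓ := ℓ + 1) (by omega), truncW, if_pos (by omega),
      truncW, if_pos (by omega), Nat.add_sub_cancel_left, qInt_one, zero_add, one_mul,
      W_two_mul_add_two]
  · obtain ⟨b, rfl⟩ : ∃ b, n = 2 * ℓ + b + 2 := ⟨n - 2 * ℓ - 2, by omega⟩
    rw [truncW, truncW, truncW, if_pos (by omega), if_pos (by omega), if_pos (by omega),
      show 2 * ℓ + b + 2 - 2 * ℓ = b + 2 by omega]
    exact W_succ_succ ℓ b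

end TruncatedW

section NormalOrdering

variable {A : Type*} [Ring A] [Algebra F A]

lemma add_smul_pow_eq_sum {x d : A} (hxd : d * x = q • (x * d) + 1) (t : F) (n : ℕ) :
    (x + t • d) ^ n =
      ∑ ℓ ∈ range (n + 1), (truncW n ℓ * t ^ ℓ) • qBinomExpand x d t (n - 2 * ℓ) := by
  induction n with
  | zero => simp [truncW_zero_right, qBinomExpand_zero]
  | succ n ih =>
    have step : ∀ ℓ,
        (x + t • d) * ((truncW n ℓ * t ^ ℓ) • qBinomExpand x d t (n - 2 * ℓ)) =
        (truncW n ℓ * t ^ ℓ) • qBinomExpand x d t (n - 2 * ℓ + 1) +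
          (qInt (n - 2 * ℓ) * truncW n ℓ * t ^ (ℓ + 1)) •
            qBinomExpand x d t (n + 1 - 2 * (ℓ + 1)) := by
      intro ℓ
      rw [mul_smul_comm, add_smul_mul_qBinomExpand hxd, smul_add, smul_smul,
        show n + 1 - 2 * (ℓ + 1) = n - 2 * ℓ - 1 by omega]
      congr 2
      ring
    have shift :
        ∑ ℓ ∈ range (n + 1), (truncW n ℓ * t ^ ℓ) • qBinomExpand x d t (n - 2 * ℓ + 1) =
        ∑ ℓ ∈ range (n + 1), (truncW n (ℓ + 1) * t ^ (ℓ + 1)) •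
          qBinomExpand x d t (n + 1 - 2 * (ℓ + 1)) + qBinomExpand x d t (n + 1) := by
      rw [sum_range_succ', sum_range_succ _ n, truncW_of_lt (n := n) (ℓ := n + 1) (by omega),
        truncW_zero_right, zero_mul, zero_smul, add_zero, one_mul, pow_zero, one_smul]
      congr 1
      refine sum_congr rfl fun ℓ _ => ?_
      by_cases h : 2 * (ℓ + 1) ≤ n
      · rw [show n - 2 * (ℓ + 1) + 1 = n + 1 - 2 * (ℓ + 1) by omega]
      · simp [truncW_of_lt (Nat.lt_of_not_le h)]
    rw [pow_succ', ih, mul_sum, sum_congr rfl fun ℓ _ => step ℓ, sum_add_distrib, shift,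
      sum_range_succ' _ (n + 1)]
    simp only [truncW_succ_succ, add_mul, add_smul, sum_add_distrib, truncW_zero_right, pow_zero,
      mul_one, mul_zero, Nat.sub_zero, one_smul]
    abel

lemma sum_truncW_smul_qBinomExpand (x d : A) (t : F) (n : ℕ) :
    ∑ ℓ ∈ range (n + 1), (truncW n ℓ * t ^ ℓ) • qBinomExpand x d t (n - 2 * ℓ) =
      ∑ m ∈ range (n + 1), ∑ ℓ ∈ range (min m (n - m) + 1),
        (qBinom (n - 2 * ℓ) (m - ℓ) * W n ℓ * t ^ (n - m)) •
          (x ^ (m - ℓ) * d ^ (n - m - ℓ)) := by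
  rw [sum_comm' (t' := range (n + 1)) (s' := fun ℓ => Icc ℓ (n - ℓ)) (by
    intro m ℓ
    simp only [mem_range, mem_Icc]
    omega)]
  refine sum_congr rfl fun ℓ _ => ?_
  by_cases h : 2 * ℓ ≤ n
  · obtain ⟨k, rfl⟩ := Nat.exists_eq_add_of_le h
    rw [truncW, if_pos h, qBinomExpand, Nat.sum_antidiagonal_eq_sum_range_succ_mk, smul_sum,
      show 2 * ℓ + k - ℓ = ℓ + k by omega, ← Ico_add_one_right_eq_Icc, sum_Ico_eq_sum_range,
      show ℓ + k + 1 - ℓ = k + 1 by omega, Nat.add_sub_cancel_left]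
    refine sum_congr rfl fun a ha => ?_
    rw [mem_range] at ha
    rw [smul_smul, show 2 * ℓ + k - (ℓ + a) = ℓ + (k - a) by omega, Nat.add_sub_cancel_left,
      show a + (k - a) = k by omega, show ℓ + (k - a) - ℓ = k - a by omega, pow_add]
    congr 1
    ring
  · rw [truncW_of_lt (Nat.lt_of_not_le h), zero_mul, zero_smul, Icc_eq_empty (by omega), sum_empty]

end NormalOrdering

section QDerivative

open Polynomial

lemma Dq_X_pow (n : ℕ) : Dq (X ^ n) = qInt n • X ^ (n - 1) := by
  have h : (C q * X) ^ n - X ^ n = C (q ^ n - 1) * X ^ n := by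
    rw [mul_pow, ← C_pow, C_sub, C_1, sub_mul, one_mul]
  simp only [Dq, LinearMap.smul_apply, LinearMap.comp_apply, LinearMap.sub_apply,
    AlgHom.toLinearMap_apply, LinearMap.id_apply, map_pow, aeval_X, h]
  change (q - 1)⁻¹ • divX _ = _
  rcases n with _ | n
  · simp
  · rw [divX_C_mul_X_pow, if_neg n.succ_ne_zero, smul_eq_C_mul, smul_eq_C_mul, ← mul_assoc,
      ← C_mul, qInt_eq_div, div_eq_inv_mul]

lemma Dq_mul_Xop : Dq * Xop = q • (Xop * Dq) + 1 := by
  refine (basisMonomials F).ext fun n => ?_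
  simp only [coe_basisMonomials, monomial_one_right_eq_X_pow, Module.End.mul_apply,
    LinearMap.add_apply, LinearMap.smul_apply, Module.End.one_apply, Xop, LinearMap.mulLeft_apply,
    ← pow_succ', Dq_X_pow, Nat.add_sub_cancel, mul_smul_comm]
  rcases n with _ | n
  · simp
  · rw [smul_smul, Nat.add_sub_cancel, add_comm (n + 1), qInt_add 1 (n + 1), qInt_one, pow_one,
      add_smul, one_smul, add_comm]

end QDerivative

theorem qWeyl_normal_ordering (n : ℕ) :
    (Xop + s • Dq) ^ n =
      ∑ m ∈ Finset.range (n + 1), ∑ ℓ ∈ Finset.range (min m (n - m) + 1),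
        (qBinom (n - 2 * ℓ) (m - ℓ) * W n ℓ * s ^ (n - m)) •
          (Xop ^ (m - ℓ) * Dq ^ (n - m - ℓ)) := by
  exact (add_smul_pow_eq_sum Dq_mul_Xop s n).trans (sum_truncW_smul_qBinomExpand Xop Dq s n)

end
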